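/- Let A ∈ ℂ^{p×p} and B ∈ ℂ^{q×q} have disjoint spectra. Then there exist scalars γ_{jk}, 0 ≤ j ≤ p−1, 0 ≤ k ≤ q−1, depending only on A and B, such that for every C ∈ ℂ^{p×q}, the unique solution of AX − XB = C is X = Σ_{j,k} γ_{jk} A^j C B^k. -/
import Mathlib


open Matrix
open Polynomial

private lemma specRoot {n : ℕ} (M : Matrix (Fin n) (Fin n) ℂ) (μ : ℂ) :
    μ ∈ spectrum ℂ M ↔ M.charpoly.eval μ = 0 := by
  rw [spectrum.mem_iff, Matrix.isUnit_iff_isUnit_det, isUnit_iff_ne_zero, not_ne_iff]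
  have : M.charpoly.eval μ = ((algebraMap ℂ (Matrix (Fin n) (Fin n) ℂ)) μ - M).det := by
    rw [Matrix.charpoly, Polynomial.eval, ← Polynomial.coe_eval₂RingHom, RingHom.map_det]
    congr 1
    ext i j
    by_cases hij : i = j <;>
      simp [charmatrix_apply, hij, Matrix.algebraMap_matrix_apply, diagonal]
  rw [this]

private noncomputable def mulLR {p q : ℕ} (M : Matrix (Fin p) (Fin p) ℂ)
    (N : Matrix (Fin q) (Fin q) ℂ) :
    Matrix (Fin p) (Fin q) ℂ →ₗ[ℂ] Matrix (Fin p) (Fin q) ℂ where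
  toFun C := M * C * N
  map_add' := by intros; simp [Matrix.mul_add, Matrix.add_mul]
  map_smul' := by intros; simp [Matrix.mul_smul, Matrix.smul_mul]

@[simp] private lemma mulLR_apply {p q : ℕ} (M : Matrix (Fin p) (Fin p) ℂ)
    (N : Matrix (Fin q) (Fin q) ℂ) (C : Matrix (Fin p) (Fin q) ℂ) :
    mulLR M N C = M * C * N := rfl

private lemma telescope {p q : ℕ} (A : Matrix (Fin p) (Fin p) ℂ) (B : Matrix (Fin q) (Fin q) ℂ)
    (X : Matrix (Fin p) (Fin q) ℂ) (n : ℕ) :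
    A ^ n * X - X * B ^ n =
      ∑ i ∈ Finset.range n, A ^ i * (A * X - X * B) * B ^ (n - 1 - i) := by
  induction n with
  | zero => simp
  | succ n ih =>
    rw [Finset.sum_range_succ]
    have hre : ∀ i ∈ Finset.range n,
        A ^ i * (A * X - X * B) * B ^ (n + 1 - 1 - i)
          = (A ^ i * (A * X - X * B) * B ^ (n - 1 - i)) * B := by
      intro i hi
      rw [Finset.mem_range] at hi
      rw [show n + 1 - 1 - i = (n - 1 - i) + 1 from by omega, pow_succ, ← Matrix.mul_assoc]
    rw [Finset.sum_congr rfl hre, ← Matrix.sum_mul, ← ih,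
      show n + 1 - 1 - n = 0 from by omega, pow_zero, Matrix.mul_one]
    simp only [pow_succ, Matrix.mul_assoc, Matrix.sub_mul, Matrix.mul_sub]
    abel

/-- When `A` and `B` have disjoint spectra, there are scalars `γ j k`
(`0 ≤ j ≤ p-1`, `0 ≤ k ≤ q-1`), depending only on `A` and `B`, such that the
unique solution of the Sylvester equation `AX - XB = C` is
`X = ∑ j k, γ j k • A^j * C * B^k`. -/
theorem sylvester_solution_polynomial_formula
    (p q : ℕ) (A : Matrix (Fin p) (Fin p) ℂ) (B : Matrix (Fin q) (Fin q) ℂ)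
    (h : Disjoint (spectrum ℂ A) (spectrum ℂ B)) :
    ∃ γ : Fin p → Fin q → ℂ,
      ∀ C X : Matrix (Fin p) (Fin q) ℂ, A * X - X * B = C →
        X = ∑ j : Fin p, ∑ k : Fin q, γ j k • (A ^ (j : ℕ) * C * B ^ (k : ℕ)) := by
  rcases Nat.eq_zero_or_pos p with hp | hp
  · subst hp
    exact ⟨fun _ _ => 0, fun C X _ => by ext i j; exact i.elim0⟩
  rcases Nat.eq_zero_or_pos q with hq | hq
  · subst hq
    exact ⟨fun _ _ => 0, fun C X _ => by ext i j; exact j.elim0⟩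
  set f := A.charpoly with hf
  set g := B.charpoly with hg
  -- coprimality of the characteristic polynomials
  have hcop : IsCoprime f g := by
    rw [Polynomial.isCoprime_iff_aeval_ne_zero_of_isAlgClosed (k := ℂ) (K := ℂ)]
    intro a
    by_contra hcon
    push_neg at hcon
    have ha : a ∈ spectrum ℂ A := (specRoot A a).2 (by
      have h1 := hcon.1
      rw [hf] at h1
      rwa [Polynomial.aeval_def, eval₂_eq_eval_map, Algebra.algebraMap_self,
        Polynomial.map_id] at h1)
    have hb : a ∈ spectrum ℂ B := (specRoot B a).2 (by
      have h1 := hcon.2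
      rw [hg] at h1
      rwa [Polynomial.aeval_def, eval₂_eq_eval_map, Algebra.algebraMap_self,
        Polynomial.map_id] at h1)
    exact Set.disjoint_left.mp h ha hb
  obtain ⟨u, v, huv⟩ := hcop
  set W := aeval A v with hWdef
  have hf0 : aeval A f = 0 := by rw [hf]; exact Matrix.aeval_self_charpoly A
  have hg0 : aeval B g = 0 := by rw [hg]; exact Matrix.aeval_self_charpoly B
  have hW : W * aeval A g = 1 := by
    have h1 := congrArg (aeval A) huv
    simpa only [map_add, _root_.map_mul, _root_.map_one, hf0, Matrix.mul_zero, zero_add,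
      ← hWdef] using h1
  -- the span of the maps C ↦ A^j C B^k
  set T : Fin p × Fin q → (Matrix (Fin p) (Fin q) ℂ →ₗ[ℂ] Matrix (Fin p) (Fin q) ℂ) :=
    fun jk => mulLR (A ^ (jk.1 : ℕ)) (B ^ (jk.2 : ℕ)) with hT
  set V := Submodule.span ℂ (Set.range T) with hV
  have hmemA : ∀ (r : ℂ[X]) (k : ℕ), k < q → mulLR (aeval A r) (B ^ k) ∈ V := by
    intro r k hk
    rw [Matrix.aeval_eq_aeval_mod_charpoly A r]
    have hdeg : (r %ₘ f).natDegree < p := by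
      by_cases h0 : r %ₘ f = 0
      · simpa [h0] using hp
      · have h1 : (r %ₘ f).degree < f.degree := degree_modByMonic_lt r A.charpoly_monic
        rw [hf, Matrix.charpoly_degree_eq_dim] at h1
        have := Polynomial.natDegree_lt_iff_degree_lt h0 |>.mpr (by simpa using h1)
        simpa using this
    have hexp : mulLR (aeval A (r %ₘ f)) (B ^ k)
        = ∑ m ∈ Finset.range p, (r %ₘ f).coeff m • mulLR (A ^ m) (B ^ k) := by
      ext C
      simp only [mulLR_apply, LinearMap.coe_sum, Finset.sum_apply, LinearMap.smul_apply]
      rw [aeval_eq_sum_range' hdeg, Matrix.sum_mul, Matrix.sum_mul]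
      simp [Matrix.smul_mul]
    rw [hexp]
    refine Submodule.sum_mem _ fun m hm => Submodule.smul_mem _ _ (Submodule.subset_span ?_)
    exact ⟨(⟨m, Finset.mem_range.mp hm⟩, ⟨k, hk⟩), rfl⟩
  -- the solution operator
  set Ψ : Matrix (Fin p) (Fin q) ℂ →ₗ[ℂ] Matrix (Fin p) (Fin q) ℂ :=
    ∑ i ∈ Finset.range (q + 1), g.coeff i •
      ∑ j ∈ Finset.range i, mulLR (W * A ^ j) (B ^ (i - 1 - j)) with hΨdef
  have hΨV : Ψ ∈ V := by
    refine Submodule.sum_mem _ fun i hi => Submodule.smul_mem _ _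
      (Submodule.sum_mem _ fun j hj => ?_)
    rw [Finset.mem_range] at hi hj
    have hWA : W * A ^ j = aeval A (v * X ^ j) := by
      rw [_root_.map_mul, map_pow, aeval_X, ← hWdef]
    rw [hWA]
    exact hmemA _ _ (by omega)
  have hΨ : ∀ X : Matrix (Fin p) (Fin q) ℂ, X = Ψ (A * X - X * B) := by
    intro X
    have hgd : g.natDegree < q + 1 := by
      rw [hg, Matrix.charpoly_natDegree_eq_dim]; simp
    have key : (aeval A g) * X = ∑ i ∈ Finset.range (q + 1), g.coeff i •
        ∑ j ∈ Finset.range i, A ^ j * (A * X - X * B) * B ^ (i - 1 - j) := by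
      calc (aeval A g) * X = (aeval A g) * X - X * (aeval B g) := by
            rw [hg0, Matrix.mul_zero, sub_zero]
        _ = ∑ i ∈ Finset.range (q + 1), g.coeff i • (A ^ i * X - X * B ^ i) := by
            rw [aeval_eq_sum_range' hgd A, aeval_eq_sum_range' hgd B, Matrix.sum_mul,
              Matrix.mul_sum]
            simp [Matrix.smul_mul, Matrix.mul_smul, ← Finset.sum_sub_distrib, smul_sub]
        _ = _ := Finset.sum_congr rfl fun i _ => by rw [telescope A B X i]
    calc X = W * ((aeval A g) * X) := by
          rw [← Matrix.mul_assoc, hW, Matrix.one_mul]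
      _ = Ψ (A * X - X * B) := by
          rw [key, hΨdef]
          simp only [LinearMap.coe_sum, Finset.sum_apply, LinearMap.smul_apply, mulLR_apply,
            Matrix.mul_sum, Matrix.mul_smul, Matrix.mul_assoc]
  obtain ⟨c, hc⟩ := (Submodule.mem_span_range_iff_exists_fun ℂ).mp hΨV
  refine ⟨fun j k => c (j, k), fun C X hX => ?_⟩
  have hXC : X = Ψ C := by rw [← hX]; exact hΨ X
  rw [hXC, ← hc]
  simp [hT, Fintype.sum_prod_type, LinearMap.coe_sum, Finset.sum_apply]
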